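/- arXiv:2504.17467 — 2 statements merged into one kernel-verified Lean document; each statement's English description precedes it below -/
import Mathlib

section
/- The matching produced by the doctor-proposing deferred acceptance algorithm is doctor-optimal among stable matchings: for every stable matching μ' and every doctor d, the DA outcome assigns d a hospital weakly preferred (by d) to μ'_d. -/
open Finset

variable {D H : Type*} [Fintype D] [DecidableEq D] [Fintype H] [DecidableEq H]

/-- The hospital doctor `d` proposes to, given the set `A` of (doctor, hospital)
pairs `(d, h)` such that `h` has already rejected `d`.  Doctor preferences are
given by `pref d`, the list of `d`'s acceptable hospitals in order of strict
preference. -/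
def propose (pref : D → List H) (A : Finset (D × H)) (d : D) : Option H :=
  (pref d).find? (fun h => decide ((d, h) ∉ A))

/-- The set of doctors currently applying to hospital `h`. -/
def proposers (pref : D → List H) (A : Finset (D × H)) (h : H) : Finset D :=
  univ.filter (fun d => propose pref A d = some h)

/-- The (up to) `n` best doctors of `S` according to hospital `h`'s strict
priority order (lower `prio h` value means more preferred). -/
def topN (prio : H → D → ℕ) (h : H) (n : ℕ) (S : Finset D) : Finset D :=
  S.filter (fun d => (S.filter (fun d' => prio h d' < prio h d)).card < n)

/-- The doctors tentatively kept by hospital `h`: the best acceptable applicants,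
up to the capacity `q h`. -/
def kept (pref : D → List H) (prio : H → D → ℕ) (acc : H → Finset D) (q : H → ℕ)
    (A : Finset (D × H)) (h : H) : Finset D :=
  topN prio h (q h) (proposers pref A h ∩ acc h)

/-- One round of the doctor-proposing deferred acceptance algorithm, recorded via
the set of rejections so far: every applicant not tentatively kept is rejected. -/
def daStep (pref : D → List H) (prio : H → D → ℕ) (acc : H → Finset D) (q : H → ℕ)
    (A : Finset (D × H)) : Finset (D × H) :=
  A ∪ univ.filter (fun p : D × H =>
    propose pref A p.1 = some p.2 ∧ p.1 ∉ kept pref prio acc q A p.2)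

/-- The outcome of the doctor-proposing deferred acceptance algorithm. -/
def daMatch (pref : D → List H) (prio : H → D → ℕ) (acc : H → Finset D) (q : H → ℕ)
    (d : D) : Option H :=
  propose pref ((daStep pref prio acc q)^[Fintype.card D * Fintype.card H + 1] ∅) d

/-- The set of doctors matched to hospital `h` under matching `μ`. -/
def matchedSet (μ : D → Option H) (h : H) : Finset D :=
  univ.filter (fun d => μ d = some h)

/-- The rank of an outcome in doctor `d`'s preference list (smaller is better;
being unmatched ranks just below the least preferred acceptable hospital). -/
def rankOf (pref : D → List H) (d : D) : Option H → ℕ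
  | none => (pref d).length
  | some h => (pref d).idxOf h

/-- Doctor `d` strictly prefers hospital `h` to outcome `o`. -/
def DPrefers (pref : D → List H) (d : D) (h : H) (o : Option H) : Prop :=
  h ∈ pref d ∧ rankOf pref d (some h) < rankOf pref d o

/-- Individual rationality: nobody is matched with an unacceptable partner. -/
def IndivRat (pref : D → List H) (acc : H → Finset D) (μ : D → Option H) : Prop :=
  ∀ d h, μ d = some h → h ∈ pref d ∧ d ∈ acc h

/-- `(d, h)` is a blocking pair of `μ`. -/
def Blocks (pref : D → List H) (prio : H → D → ℕ) (acc : H → Finset D) (q : H → ℕ)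
    (μ : D → Option H) (d : D) (h : H) : Prop :=
  DPrefers pref d h (μ d) ∧
    (((matchedSet μ h).card < q h ∧ d ∈ acc h) ∨
      ∃ d' ∈ matchedSet μ h, prio h d < prio h d')

/-- Stability: individual rationality, capacities respected, and no blocking pair. -/
def IsStable (pref : D → List H) (prio : H → D → ℕ) (acc : H → Finset D) (q : H → ℕ)
    (μ : D → Option H) : Prop :=
  IndivRat pref acc μ ∧ (∀ h, (matchedSet μ h).card ≤ q h) ∧
    ∀ d h, ¬ Blocks pref prio acc q μ d h

/-! Throughout the run of deferred acceptance, no doctor is ever rejected by a hospital she is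
assigned to in a stable matching `μ`. Inductively, every doctor proposes to a hospital she weakly
prefers to her `μ`-partner. If `h` rejects `d` with `μ d = some h`, at least `q h` applicants
to `h` rank above `d`; any of them not matched to `h` by `μ` would form a blocking pair with `h`,
so together with `d` they exceed the capacity of `h` in `μ`. Hence the final proposal of each
doctor, her DA outcome, is at least as good as her `μ`-partner. -/

theorem List.idxOf_le_of_find?_eq_some {α : Type*} [DecidableEq α] {p : α → Bool} {a b : α} :
    ∀ {l : List α}, l.find? p = some b → a ∈ l → p a = true → l.idxOf b ≤ l.idxOf a
  | [], hb, _, _ => by simp at hb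
  | c :: t, hb, ha, hpa => by
    by_cases hpc : p c = true
    · rw [List.find?_cons_of_pos hpc] at hb
      cases hb
      simp
    · rw [List.find?_cons_of_neg hpc] at hb
      have hbc : c ≠ b := fun h => hpc (h ▸ List.find?_some hb)
      have hac : c ≠ a := fun h => hpc (h ▸ hpa)
      have hat : a ∈ t := (List.mem_cons.1 ha).resolve_left (Ne.symm hac)
      rw [List.idxOf_cons_ne _ hbc, List.idxOf_cons_ne _ hac]
      exact Nat.succ_le_succ (List.idxOf_le_of_find?_eq_some hb hat hpa)

def NoPartnerRejected (μ : D → Option H) (A : Finset (D × H)) : Prop :=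
  ∀ d h, (d, h) ∈ A → μ d ≠ some h

section

omit [Fintype D] [Fintype H]

variable {pref : D → List H} {prio : H → D → ℕ} {acc : H → Finset D}
  {μ : D → Option H} {A : Finset (D × H)} {d : D} {h : H}

lemma mem_pref_of_propose_eq_some (hp : propose pref A d = some h) : h ∈ pref d :=
  List.mem_of_find?_eq_some hp

omit [DecidableEq D] in
lemma rankOf_le_length (o : Option H) : rankOf pref d o ≤ (pref d).length := by
  cases o with
  | none => exact le_rfl
  | some h => exact List.idxOf_le_length

lemma rankOf_propose_le (hir : IndivRat pref acc μ) (hA : NoPartnerRejected μ A) (d : D) :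
    rankOf pref d (propose pref A d) ≤ rankOf pref d (μ d) := by
  cases hμ : μ d with
  | none => exact rankOf_le_length _
  | some h₀ =>
    have hh₀ : h₀ ∈ pref d := (hir d h₀ hμ).1
    have hfree : decide ((d, h₀) ∉ A) = true := by simpa using fun hc => hA d h₀ hc hμ
    cases hp : propose pref A d with
    | none => exact absurd hfree (by simpa using List.find?_eq_none.1 hp h₀ hh₀)
    | some h => exact List.idxOf_le_of_find?_eq_some hp hh₀ hfree

lemma dPrefers_propose (hir : IndivRat pref acc μ) (hA : NoPartnerRejected μ A)
    (hp : propose pref A d = some h) (hne : μ d ≠ some h) : DPrefers pref d h (μ d) := by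
  have hh := mem_pref_of_propose_eq_some hp
  refine ⟨hh, lt_of_le_of_ne (hp ▸ rankOf_propose_le hir hA d) fun heq => ?_⟩
  rcases hμ : μ d with _ | h₀ <;> rw [hμ] at heq
  · exact (List.idxOf_lt_length_iff.2 hh).ne heq
  · exact hne (hμ.trans (congrArg some ((List.idxOf_inj hh).1 heq).symm))

omit [DecidableEq D] [DecidableEq H] in
lemma le_card_filter_prio_lt_of_notMem_topN {n : ℕ} {S : Finset D} (hd : d ∈ S)
    (hk : d ∉ topN prio h n S) : n ≤ (S.filter fun d' => prio h d' < prio h d).card := by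
  simpa [topN, hd] using hk

end

section

variable {pref : D → List H} {prio : H → D → ℕ} {acc : H → Finset D} {q : H → ℕ}
  {μ : D → Option H} {A : Finset (D × H)} {d : D} {h : H}

omit [Fintype H] in
-- Otherwise `(d', h)` blocks `μ`.
lemma eq_some_of_propose_of_prio_lt (hst : IsStable pref prio acc q μ)
    (hA : NoPartnerRejected μ A) {d' : D} (hμ : μ d = some h)
    (hp : propose pref A d' = some h) (hlt : prio h d' < prio h d) : μ d' = some h := by
  by_contra hne
  refine hst.2.2 d' h ⟨dPrefers_propose hst.1 hA hp hne, Or.inr ⟨d, ?_, hlt⟩⟩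
  simpa [matchedSet] using hμ

lemma noPartnerRejected_daStep (hst : IsStable pref prio acc q μ)
    (hA : NoPartnerRejected μ A) : NoPartnerRejected μ (daStep pref prio acc q A) := by
  intro d h hmem hμ
  simp only [daStep, mem_union, mem_filter, mem_univ, true_and] at hmem
  rcases hmem with hmem | ⟨hp, hkept⟩
  · exact hA d h hmem hμ
  set S := proposers pref A h ∩ acc h
  set B := S.filter fun d' => prio h d' < prio h d
  have hdS : d ∈ S := by simpa [S, proposers, hp] using (hst.1 d h hμ).2
  have hqB : q h ≤ B.card := le_card_filter_prio_lt_of_notMem_topN hdS hkept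
  have hdB : d ∉ B := by simp [B]
  have hsub : insert d B ⊆ matchedSet μ h := by
    intro d' hd'
    rcases mem_insert.1 hd' with rfl | hd'B
    · simpa [matchedSet] using hμ
    · simp only [B, S, proposers, mem_filter, mem_inter, mem_univ, true_and] at hd'B
      simpa [matchedSet] using eq_some_of_propose_of_prio_lt hst hA hμ hd'B.1.1 hd'B.2
  have := calc B.card + 1 = (insert d B).card := (card_insert_of_notMem hdB).symm
    _ ≤ (matchedSet μ h).card := card_le_card hsub
    _ ≤ q h := hst.2.1 h
  omega

lemma noPartnerRejected_daStep_iterate (hst : IsStable pref prio acc q μ) (n : ℕ) :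
    NoPartnerRejected μ ((daStep pref prio acc q)^[n] ∅) := by
  induction n with
  | zero => simp [NoPartnerRejected]
  | succ n ih =>
    rw [Function.iterate_succ_apply']
    exact noPartnerRejected_daStep hst ih

end

theorem da_doctor_optimal_general (pref : D → List H) (prio : H → D → ℕ) (acc : H → Finset D)
    (q : H → ℕ) :
    ∀ μ' : D → Option H, IsStable pref prio acc q μ' →
      ∀ d, rankOf pref d (daMatch pref prio acc q d) ≤ rankOf pref d (μ' d) :=
  fun _ hst => rankOf_propose_le hst.1 (noPartnerRejected_daStep_iterate hst _)

/-- the DA outcome is doctor-optimal among stable matchings: for every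
stable matching `μ'` and every doctor `d`, the DA outcome assigns `d` a hospital
weakly preferred by `d` to `μ' d` (smaller rank = more preferred). -/
theorem da_doctor_optimal (pref : D → List H) (prio : H → D → ℕ) (acc : H → Finset D)
    (q : H → ℕ) (hinj : ∀ h, Function.Injective (prio h))
    (hnd : ∀ d, (pref d).Nodup)
    (hcons : ∀ h d d', prio h d < prio h d' → d' ∈ acc h → d ∈ acc h) :
    ∀ μ' : D → Option H, IsStable pref prio acc q μ' →
      ∀ d, rankOf pref d (daMatch pref prio acc q d) ≤ rankOf pref d (μ' d) :=
  da_doctor_optimal_general pref prio acc q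
end

section
/- Let μ^F be the matching produced by the flexible deferred acceptance (FDA) algorithm in a market with regional caps, and for each hospital h define adapted capacity q̃_h = |μ^F_h|. Then the doctor-proposing DA algorithm run with capacities (q̃_h) (ignoring regional caps) produces exactly μ^F. -/
open Finset

variable {D H : Type*} [Fintype D] [DecidableEq D] [Fintype H] [DecidableEq H]

section FDA

variable {R : Type*} [Fintype R] [DecidableEq R]

/-- Number of doctors currently kept in region `r`. -/
def regionCount (region : H → R) (st : H → Finset D) (r : R) : ℕ :=
  ∑ h ∈ univ.filter (fun h => region h = r), (st h).card

/-- The best remaining acceptable applicant(s) of hospital `h` (a singleton when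
`prio h` is injective): doctors of `pool` not yet kept with minimal priority value. -/
def bestRemaining (prio : H → D → ℕ) (h : H) (pool held : Finset D) : Finset D :=
  (pool \ held).filter (fun d => ∀ d' ∈ pool \ held, prio h d ≤ prio h d')

/-- One turn of hospital `h` in the round-robin stage of the FDA algorithm:
if the regional cap and its own physical capacity are not yet binding, `h`
additionally keeps its best remaining applicant. -/
def fdaTurn (pref : D → List H) (prio : H → D → ℕ) (acc : H → Finset D) (q : H → ℕ)
    (region : H → R) (qreg : R → ℕ) (A : Finset (D × H)) (st : H → Finset D)
    (h : H) : H → Finset D :=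
  if regionCount region st (region h) < qreg (region h) ∧ (st h).card < q h then
    Function.update st h
      (st h ∪ bestRemaining prio h (proposers pref A h ∩ acc h) (st h))
  else st

/-- The doctors kept in region `r` given rejections `A`: first each hospital fills
its target capacity with its best acceptable applicants, then hospitals take turns
in the fixed order `ord r` keeping additional doctors until the regional cap or the
physical capacities bind or the applicant pools empty. -/
def regionKept (pref : D → List H) (prio : H → D → ℕ) (acc : H → Finset D) (q : H → ℕ)
    (region : H → R) (qreg : R → ℕ) (tgt : H → ℕ) (ord : R → List H)
    (A : Finset (D × H)) (r : R) : H → Finset D :=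
  (fun st => (ord r).foldl (fdaTurn pref prio acc q region qreg A) st)^[qreg r + Fintype.card D + 1]
    (fun h => topN prio h (tgt h) (proposers pref A h ∩ acc h))

/-- The doctors tentatively kept by hospital `h` in the FDA algorithm. -/
def fdaKept (pref : D → List H) (prio : H → D → ℕ) (acc : H → Finset D) (q : H → ℕ)
    (region : H → R) (qreg : R → ℕ) (tgt : H → ℕ) (ord : R → List H)
    (A : Finset (D × H)) (h : H) : Finset D :=
  regionKept pref prio acc q region qreg tgt ord A (region h) h

/-- One round of the flexible deferred acceptance algorithm, recorded via the set
of rejections so far. -/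
def fdaStep (pref : D → List H) (prio : H → D → ℕ) (acc : H → Finset D) (q : H → ℕ)
    (region : H → R) (qreg : R → ℕ) (tgt : H → ℕ) (ord : R → List H)
    (A : Finset (D × H)) : Finset (D × H) :=
  A ∪ univ.filter (fun p : D × H =>
    propose pref A p.1 = some p.2 ∧
      p.1 ∉ fdaKept pref prio acc q region qreg tgt ord A p.2)

/-- The outcome of the flexible deferred acceptance (FDA) algorithm. -/
def fdaMatch (pref : D → List H) (prio : H → D → ℕ) (acc : H → Finset D) (q : H → ℕ)
    (region : H → R) (qreg : R → ℕ) (tgt : H → ℕ) (ord : R → List H) (d : D) :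
    Option H :=
  propose pref
    ((fdaStep pref prio acc q region qreg tgt ord)^[Fintype.card D * Fintype.card H + 1] ∅) d

end FDA

/-!
FDA is deferred acceptance with capacities that depend on the current set of rejections: given
the applicants, hospital `h` keeps its best `min (q h) (tgt h + τ h)` of them, where `τ h` counts
the round-robin turns of `h` before its regional cap binds.  After a round every hospital still
has at least the applicants it kept, so the cap binds no later and these capacities never
increase.  In deferred acceptance with non-increasing capacities, a hospital that has rejected
someone is full from then on and its cutoff only improves.  Now compare with DA at the final
sizes `q̃ h`, rejection by rejection: a doctor rejected by either algorithm is beaten at that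
hospital by at least as many applicants as the other algorithm keeps there in the end, none of
whom the other algorithm rejects, so it rejects her too.
-/

theorem iterate_empty_subset {α : Type*} {f : Finset α → Finset α} {s : Finset α}
    (hf : ∀ t, f^[t] ∅ ⊆ s → f (f^[t] ∅) ⊆ s) (t : ℕ) : f^[t] ∅ ⊆ s := by
  induction t with
  | zero => exact empty_subset s
  | succ t ih => rw [Function.iterate_succ_apply']; exact hf t ih

theorem iterate_empty_isFixedPt {α : Type*} [Fintype α] [DecidableEq α]
    {f : Finset α → Finset α} (hf : ∀ s, s ⊆ f s) {n : ℕ} (hn : Fintype.card α ≤ n) :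
    Function.IsFixedPt f (f^[n] ∅) := by
  by_contra hne
  have hgrow : ∀ k ≤ n + 1, k ≤ #(f^[k] ∅) := by
    intro k
    induction k with
    | zero => simp
    | succ k ih =>
      intro hk
      have hstrict : f^[k] ∅ ⊂ f^[k + 1] ∅ := by
        rw [Function.iterate_succ_apply']
        refine (hf _).ssubset_of_ne fun hfix => hne ?_
        have hstable : f^[n] ∅ = f^[k] ∅ := by
          rw [show n = (n - k) + k by omega, Function.iterate_add_apply,
            Function.iterate_fixed hfix.symm]
        rw [hstable]
        exact hfix.symm
      exact (ih (by omega)).trans_lt (card_lt_card hstrict)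
  have := hgrow (n + 1) le_rfl
  have := card_le_univ (f^[n + 1] ∅)
  omega

section Proposals

variable {α β : Type*} [DecidableEq α] [DecidableEq β]
  {pref : α → List β} {acc : β → Finset α} {A B : Finset (α × β)} {d : α} {h : β}

def applicants [Fintype α] (pref : α → List β) (acc : β → Finset α) (A : Finset (α × β))
    (h : β) : Finset α :=
  proposers pref A h ∩ acc h

theorem mem_proposers [Fintype α] : d ∈ proposers pref A h ↔ propose pref A d = some h := by
  simp [proposers]

theorem notMem_of_propose_eq_some (hd : propose pref A d = some h) : (d, h) ∉ A := by
  simpa using List.find?_some hd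

theorem propose_eq_of_subset (hAB : A ⊆ B) (hd : propose pref A d = some h)
    (hdB : (d, h) ∉ B) : propose pref B d = some h := by
  rw [propose, List.find?_eq_some_iff_append] at hd ⊢
  obtain ⟨-, as, bs, hsplit, hrej⟩ := hd
  refine ⟨by simpa using hdB, as, bs, hsplit, fun a ha => ?_⟩
  simpa using hAB (by simpa using hrej a ha)

theorem mem_applicants_of_subset [Fintype α] (hAB : A ⊆ B) (hd : d ∈ applicants pref acc A h)
    (hdB : (d, h) ∉ B) : d ∈ applicants pref acc B h := by
  rw [applicants, mem_inter, mem_proposers] at hd ⊢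
  exact ⟨propose_eq_of_subset hAB hd.1 hdB, hd.2⟩

end Proposals

section TopN

variable {α β : Type*} {prio : β → α → ℕ} {h : β} {n : ℕ} {S T : Finset α} {y z : α}

def prioRank (prio : β → α → ℕ) (h : β) (S : Finset α) (z : α) : ℕ :=
  #{d ∈ S | prio h d < prio h z}

theorem mem_topN : z ∈ topN prio h n S ↔ z ∈ S ∧ prioRank prio h S z < n := by
  simp [topN, prioRank]

theorem topN_subset : topN prio h n S ⊆ S := filter_subset _ _

theorem prioRank_lt_card (hz : z ∈ S) : prioRank prio h S z < #S :=
  card_lt_card ((ssubset_iff_of_subset (filter_subset _ _)).2 ⟨z, hz, by simp⟩)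

theorem prioRank_lt_prioRank (hy : y ∈ S) (hyz : prio h y < prio h z) :
    prioRank prio h S y < prioRank prio h S z := by
  refine card_lt_card ((ssubset_iff_of_subset fun d hd => ?_).2 ⟨y, ?_, ?_⟩)
  · rw [mem_filter] at hd ⊢
    exact ⟨hd.1, hd.2.trans hyz⟩
  · simpa using ⟨hy, hyz⟩
  · simp

theorem mem_topN_of_lt (hy : y ∈ S) (hz : z ∈ topN prio h n S) (hyz : prio h y < prio h z) :
    y ∈ topN prio h n S := by
  rw [mem_topN] at hz ⊢
  exact ⟨hy, (prioRank_lt_prioRank hy hyz).trans hz.2⟩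

theorem lt_of_mem_topN_of_notMem (hinj : Function.Injective (prio h)) (hy : y ∈ S)
    (hyn : y ∉ topN prio h n S) (hz : z ∈ topN prio h n S) : prio h z < prio h y := by
  rcases lt_trichotomy (prio h z) (prio h y) with hlt | heq | hgt
  · exact hlt
  · exact absurd (hinj heq ▸ hz) hyn
  · exact absurd (mem_topN_of_lt hy hz hgt) hyn

theorem card_topN (hinj : Function.Injective (prio h)) (n : ℕ) (S : Finset α) :
    #(topN prio h n S) = min n #S := by
  have hinjOn : Set.InjOn (prioRank prio h S) S := by
    intro a ha b hb hab
    by_contra hne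
    rcases lt_or_gt_of_ne (hinj.ne hne) with hlt | hlt
    · exact (prioRank_lt_prioRank ha hlt).ne hab
    · exact (prioRank_lt_prioRank hb hlt).ne hab.symm
  have himage : S.image (prioRank prio h S) = range #S := by
    refine eq_of_subset_of_card_le (fun k hk => ?_) ?_
    · obtain ⟨a, ha, rfl⟩ := mem_image.1 hk
      exact mem_range.2 (prioRank_lt_card ha)
    · rw [card_range, card_image_of_injOn hinjOn]
  calc #(topN prio h n S) = #((topN prio h n S).image (prioRank prio h S)) :=
        (card_image_of_injOn (hinjOn.mono topN_subset)).symm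
    _ = #{k ∈ range #S | k < n} := by rw [← himage, filter_image]; rfl
    _ = min n #S := by
        rw [show {k ∈ range #S | k < n} = range (min n #S) by ext; simp; omega, card_range]

theorem card_topN_le (hinj : Function.Injective (prio h)) : #(topN prio h n S) ≤ n := by
  rw [card_topN hinj]; exact min_le_left _ _

theorem card_topN_eq_of_notMem (hinj : Function.Injective (prio h)) (hy : y ∈ S)
    (hyn : y ∉ topN prio h n S) : #(topN prio h n S) = n := by
  have hlt : #(topN prio h n S) < #S :=
    card_lt_card ((ssubset_iff_of_subset topN_subset).2 ⟨y, hy, hyn⟩)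
  rw [card_topN hinj] at hlt ⊢
  omega

theorem card_topN_le_card_topN (hinj : Function.Injective (prio h))
    (hST : topN prio h n S ⊆ T) : #(topN prio h n S) ≤ #(topN prio h n T) := by
  rw [card_topN hinj n T]
  exact le_min (card_topN_le hinj) (card_le_card hST)

theorem topN_eq_self [DecidableEq α] (hS : #S ≤ n) : topN prio h n S = S :=
  Subset.antisymm topN_subset fun _ hz =>
    mem_topN.2 ⟨hz, (prioRank_lt_card hz).trans_le hS⟩

theorem topN_succ [Fintype α] [DecidableEq α] (hinj : Function.Injective (prio h)) :
    topN prio h (n + 1) S = topN prio h n S ∪ bestRemaining prio h S (topN prio h n S) := by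
  ext z
  simp only [mem_union, bestRemaining, mem_filter, mem_sdiff]
  constructor
  · intro hz
    rw [mem_topN] at hz
    by_cases hzn : prioRank prio h S z < n
    · exact Or.inl (mem_topN.2 ⟨hz.1, hzn⟩)
    refine Or.inr ⟨⟨hz.1, fun h' => hzn (mem_topN.1 h').2⟩, fun d ⟨hd, hdn⟩ => ?_⟩
    by_contra! hdz
    exact hdn (mem_topN.2 ⟨hd, (prioRank_lt_prioRank hd hdz).trans_le (by omega)⟩)
  · rintro (hz | ⟨⟨hz, hzn⟩, hmin⟩)
    · rw [mem_topN] at hz ⊢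
      exact ⟨hz.1, hz.2.trans n.lt_succ_self⟩
    have hbetter : {d ∈ S | prio h d < prio h z} ⊆ topN prio h n S := fun d hd => by
      rw [mem_filter] at hd
      by_contra hdn
      exact (hmin d ⟨hd.1, hdn⟩).not_gt hd.2
    exact mem_topN.2 ⟨hz, Nat.lt_succ_of_le ((card_le_card hbetter).trans (card_topN_le hinj))⟩

end TopN

section CappedDA

variable (pref : D → List H) (prio : H → D → ℕ) (acc : H → Finset D)

/-- Deferred acceptance in which the capacity `cap A h` of hospital `h` may depend on the set
`A` of rejections so far; DA is the case of a constant `cap`. -/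
def cappedKept (cap : Finset (D × H) → H → ℕ) (A : Finset (D × H)) (h : H) : Finset D :=
  topN prio h (cap A h) (applicants pref acc A h)

def cappedStep (cap : Finset (D × H) → H → ℕ) (A : Finset (D × H)) : Finset (D × H) :=
  A ∪ univ.filter (fun p : D × H =>
    propose pref A p.1 = some p.2 ∧ p.1 ∉ cappedKept pref prio acc cap A p.2)

def cappedRejections (cap : Finset (D × H) → H → ℕ) : Finset (D × H) :=
  (cappedStep pref prio acc cap)^[Fintype.card D * Fintype.card H + 1] ∅

def CutoffInvariant (cap : Finset (D × H) → H → ℕ) (A : Finset (D × H)) : Prop :=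
  ∀ y h, y ∈ acc h → (y, h) ∈ A →
    (∀ z ∈ cappedKept pref prio acc cap A h, prio h z < prio h y) ∧
      cap A h ≤ #(cappedKept pref prio acc cap A h)

variable {pref prio acc} {cap cap' : Finset (D × H) → H → ℕ} {A A' B : Finset (D × H)}
  {d : D} {h : H}

theorem daMatch_eq_propose_cappedRejections (q : H → ℕ) (d : D) :
    daMatch pref prio acc q d = propose pref (cappedRejections pref prio acc (fun _ => q)) d :=
  rfl

theorem mem_cappedStep {p : D × H} :
    p ∈ cappedStep pref prio acc cap A ↔
      p ∈ A ∨ (propose pref A p.1 = some p.2 ∧ p.1 ∉ cappedKept pref prio acc cap A p.2) := by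
  simp [cappedStep]

theorem cappedKept_subset_applicants_cappedStep :
    cappedKept pref prio acc cap A h ⊆ applicants pref acc (cappedStep pref prio acc cap A) h := by
  intro y hy
  have hyA : y ∈ applicants pref acc A h := topN_subset hy
  refine mem_applicants_of_subset subset_union_left hyA fun hy' => ?_
  rcases mem_cappedStep.1 hy' with hrej | ⟨-, hrej⟩
  · exact notMem_of_propose_eq_some (mem_proposers.1 (mem_inter.1 hyA).1) hrej
  · exact hrej hy

theorem cappedStep_cappedRejections :
    cappedStep pref prio acc cap (cappedRejections pref prio acc cap) =
      cappedRejections pref prio acc cap :=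
  iterate_empty_isFixedPt (fun _ => subset_union_left) (by simp [Fintype.card_prod])

theorem mem_cappedKept_of_isFixedPt (hfix : cappedStep pref prio acc cap A = A)
    (hd : propose pref A d = some h) : d ∈ cappedKept pref prio acc cap A h := by
  by_contra hdn
  refine notMem_of_propose_eq_some hd ?_
  rw [← hfix]
  exact mem_cappedStep.2 (Or.inr ⟨hd, hdn⟩)

theorem proposers_eq_cappedKept_of_isFixedPt (hfix : cappedStep pref prio acc cap A = A) :
    proposers pref A = cappedKept pref prio acc cap A := by
  funext h
  ext d
  exact ⟨fun hd => mem_cappedKept_of_isFixedPt hfix (mem_proposers.1 hd),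
    fun hd => (mem_inter.1 (topN_subset hd)).1⟩

theorem cap_iterate_le (hcap : ∀ A h, cap (cappedStep pref prio acc cap A) h ≤ cap A h)
    (k : ℕ) (B : Finset (D × H)) : cap ((cappedStep pref prio acc cap)^[k] B) h ≤ cap B h := by
  induction k with
  | zero => rfl
  | succ k ih => rw [Function.iterate_succ_apply']; exact (hcap _ h).trans ih

theorem cap_cappedRejections_le (hcap : ∀ A h, cap (cappedStep pref prio acc cap A) h ≤ cap A h)
    (t : ℕ) :
    cap (cappedRejections pref prio acc cap) h ≤ cap ((cappedStep pref prio acc cap)^[t] ∅) h := by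
  have hlimit : (cappedStep pref prio acc cap)^[Fintype.card D * Fintype.card H + 1]
      ((cappedStep pref prio acc cap)^[t] ∅) = cappedRejections pref prio acc cap := by
    rw [← Function.iterate_add_apply, add_comm, Function.iterate_add_apply]
    exact Function.iterate_fixed cappedStep_cappedRejections t
  rw [← hlimit]
  exact cap_iterate_le hcap _ _

theorem cutoffInvariant_cappedStep (hinj : ∀ h, Function.Injective (prio h))
    (hcap : ∀ h, cap (cappedStep pref prio acc cap A) h ≤ cap A h)
    (hA : CutoffInvariant pref prio acc cap A) :
    CutoffInvariant pref prio acc cap (cappedStep pref prio acc cap A) := by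
  intro y h hy hyA'
  set K := cappedKept pref prio acc cap A h
  set K' := cappedKept pref prio acc cap (cappedStep pref prio acc cap A) h
  have hKP : K ⊆ applicants pref acc (cappedStep pref prio acc cap A) h :=
    cappedKept_subset_applicants_cappedStep
  obtain ⟨hbeats, hfull⟩ : (∀ z ∈ K, prio h z < prio h y) ∧ cap A h ≤ #K := by
    rcases mem_cappedStep.1 hyA' with hyA | ⟨hprop, hrej⟩
    · exact hA y h hy hyA
    have hyP : y ∈ applicants pref acc A h := mem_inter.2 ⟨mem_proposers.2 hprop, hy⟩
    exact ⟨fun z hz => lt_of_mem_topN_of_notMem (hinj h) hyP hrej hz,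
      (card_topN_eq_of_notMem (hinj h) hyP hrej).ge⟩
  -- the pool at `h` still contains `K`, while the capacity did not grow
  have hK' : #K' = cap (cappedStep pref prio acc cap A) h := by
    have hcard : #K' = min (cap (cappedStep pref prio acc cap A) h)
        #(applicants pref acc (cappedStep pref prio acc cap A) h) := card_topN (hinj h) _ _
    have := card_le_card hKP
    have := hcap h
    omega
  refine ⟨fun z hz => ?_, hK'.ge⟩
  by_contra! hzy
  have hyz : prio h y < prio h z := by
    refine lt_of_le_of_ne hzy fun he => ?_
    obtain rfl := hinj h he
    exact notMem_of_propose_eq_some (mem_proposers.1 (mem_inter.1 (topN_subset hz)).1) hyA'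
  have hzK : insert z K ⊆ K' := insert_subset hz fun x hx =>
    mem_topN_of_lt (hKP hx) hz ((hbeats x hx).trans hyz)
  have hzn : z ∉ K := fun hzK => (hbeats z hzK).not_gt hyz
  have := card_le_card hzK
  rw [card_insert_of_notMem hzn] at this
  have := hcap h
  omega

theorem cutoffInvariant_cappedRejections (hinj : ∀ h, Function.Injective (prio h))
    (hcap : ∀ A h, cap (cappedStep pref prio acc cap A) h ≤ cap A h) :
    CutoffInvariant pref prio acc cap (cappedRejections pref prio acc cap) := by
  suffices ∀ t, CutoffInvariant pref prio acc cap ((cappedStep pref prio acc cap)^[t] ∅) from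
    this _
  intro t
  induction t with
  | zero => intro y h _ hy; exact absurd hy (notMem_empty _)
  | succ t ih =>
    rw [Function.iterate_succ_apply']
    exact cutoffInvariant_cappedStep hinj (hcap _) ih

/-- Were `d` not rejected at `A'`, the applicants beating her at `B`, which the cutoff keeps
unrejected at `A'`, would overfill `h` together with her. -/
theorem cappedStep_subset_of_isFixedPt (hfix : cappedStep pref prio acc cap' A' = A')
    (hcut : CutoffInvariant pref prio acc cap' A') (hBA : B ⊆ A')
    (hcap : ∀ h, #(cappedKept pref prio acc cap' A' h) ≤ cap B h) :
    cappedStep pref prio acc cap B ⊆ A' := by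
  rintro ⟨d, h⟩ hdB
  rcases mem_cappedStep.1 hdB with hd | ⟨hprop, hrej⟩
  · exact hBA hd
  by_contra hdA
  set K := cappedKept pref prio acc cap' A' h
  have hdK : d ∈ K := mem_cappedKept_of_isFixedPt hfix (propose_eq_of_subset hBA hprop hdA)
  have hdP : d ∈ applicants pref acc B h :=
    mem_inter.2 ⟨mem_proposers.2 hprop, (mem_inter.1 (topN_subset hdK)).2⟩
  set T := {y ∈ applicants pref acc B h | prio h y < prio h d}
  have hT : cap B h ≤ #T := by
    by_contra! hlt
    exact hrej (mem_topN.2 ⟨hdP, hlt⟩)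
  have hTK : T ⊆ K := by
    intro y hy
    obtain ⟨hyP, hyd⟩ := mem_filter.1 hy
    have hyA : (y, h) ∉ A' := fun hyA =>
      ((hcut y h (mem_inter.1 hyP).2 hyA).1 d hdK).not_gt hyd
    exact mem_topN_of_lt (mem_applicants_of_subset hBA hyP hyA) hdK hyd
  have hdT : d ∉ T := by simp [T]
  have hKcap : #K ≤ cap B h := hcap h
  have := card_le_card (insert_subset hdK hTK)
  rw [card_insert_of_notMem hdT] at this
  omega

theorem cappedRejections_adapted_eq (hinj : ∀ h, Function.Injective (prio h))
    (hcap : ∀ A h, cap (cappedStep pref prio acc cap A) h ≤ cap A h) :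
    cappedRejections pref prio acc
        (fun _ h => #(cappedKept pref prio acc cap (cappedRejections pref prio acc cap) h)) =
      cappedRejections pref prio acc cap := by
  set A := cappedRejections pref prio acc cap
  set adapted : Finset (D × H) → H → ℕ := fun _ h => #(cappedKept pref prio acc cap A h)
  have hfixA : cappedStep pref prio acc cap A = A := cappedStep_cappedRejections
  have hfixB := cappedStep_cappedRejections (pref := pref) (prio := prio) (acc := acc)
    (cap := adapted)
  have hcutA : CutoffInvariant pref prio acc cap A := cutoffInvariant_cappedRejections hinj hcap
  have hcutB := cutoffInvariant_cappedRejections (pref := pref) (acc := acc) hinj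
    (cap := adapted) fun _ _ => le_rfl
  apply Subset.antisymm
  · exact iterate_empty_subset (fun t ht => cappedStep_subset_of_isFixedPt hfixA hcutA ht
      fun _ => le_rfl) _
  · refine iterate_empty_subset (fun t ht => cappedStep_subset_of_isFixedPt hfixB hcutB ht
      fun h => ?_) _
    calc #(cappedKept pref prio acc adapted (cappedRejections pref prio acc adapted) h)
        ≤ #(cappedKept pref prio acc cap A h) := card_topN_le (hinj h)
      _ ≤ cap A h := card_topN_le (hinj h)
      _ ≤ cap ((cappedStep pref prio acc cap)^[t] ∅) h := cap_cappedRejections_le hcap t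

end CappedDA

theorem iterate_foldl_eq_foldl_flatten_replicate {α β : Type*} (f : β → α → β) (l : List α)
    (k : ℕ) (b : β) : (fun b => l.foldl f b)^[k] b = (List.replicate k l).flatten.foldl f b := by
  induction k generalizing b with
  | zero => rfl
  | succ k ih => rw [Function.iterate_succ_apply, ih, List.replicate_succ, List.flatten_cons,
      List.foldl_append]

theorem mem_of_mem_flatten_replicate {α : Type*} {a : α} {l : List α} {n : ℕ}
    (ha : a ∈ (List.replicate n l).flatten) : a ∈ l := by
  obtain ⟨l', hl', hal'⟩ := List.mem_flatten.1 ha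
  rwa [(List.mem_replicate.1 hl').2] at hal'

section FDA

variable {R : Type*} [DecidableEq R]
  (pref : D → List H) (prio : H → D → ℕ) (acc : H → Finset D) (q : H → ℕ)
  (region : H → R) (qreg : R → ℕ) (tgt : H → ℕ) (ord : R → List H)

def fdaState (A : Finset (D × H)) (L : List H) (ℓ : ℕ) : H → Finset D :=
  (L.take ℓ).foldl (fdaTurn pref prio acc q region qreg A)
    (fun h => topN prio h (tgt h) (applicants pref acc A h))

def fdaSaturation (A : Finset (D × H)) (L : List H) (r : R) : ℕ :=
  Nat.find (⟨L.length, Or.inl le_rfl⟩ : ∃ ℓ, L.length ≤ ℓ ∨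
    qreg r ≤ regionCount region (fdaState pref prio acc q region qreg tgt A L ℓ) r)

variable (D) in
def fdaSchedule (r : R) : List H :=
  (List.replicate (qreg r + Fintype.card D + 1) (ord r)).flatten

def fdaCap (A : Finset (D × H)) (h : H) : ℕ :=
  min (q h) (tgt h + ((fdaSchedule D qreg ord (region h)).take
    (fdaSaturation pref prio acc q region qreg tgt A (fdaSchedule D qreg ord (region h))
      (region h))).count h)

variable {pref prio acc q region qreg tgt ord} {A : Finset (D × H)} {L : List H} {r : R}
  {ℓ : ℕ} {h : H}

local notation "State" => fdaState pref prio acc q region qreg tgt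
local notation "Sat" => fdaSaturation pref prio acc q region qreg tgt
local notation "Turn" => fdaTurn pref prio acc q region qreg
local notation "Cap" => fdaCap pref prio acc q region qreg tgt ord

theorem fdaState_succ (hℓ : ℓ < L.length) : State A L (ℓ + 1) = Turn A (State A L ℓ) L[ℓ] := by
  rw [fdaState, List.take_add_one, List.getElem?_eq_getElem hℓ, Option.toList_some,
    List.foldl_concat]
  rfl

theorem fdaState_succ_of_length_le (hℓ : L.length ≤ ℓ) : State A L (ℓ + 1) = State A L ℓ := by
  rw [fdaState, fdaState, List.take_of_length_le hℓ, List.take_of_length_le (by omega)]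

theorem fdaSaturation_le_length : Sat A L r ≤ L.length := by
  unfold fdaSaturation
  exact Nat.find_min' _ (Or.inl le_rfl)

theorem fdaSaturation_spec :
    L.length ≤ Sat A L r ∨ qreg r ≤ regionCount region (State A L (Sat A L r)) r := by
  unfold fdaSaturation
  exact Nat.find_spec (p := fun ℓ => L.length ≤ ℓ ∨
    qreg r ≤ regionCount region (State A L ℓ) r) ⟨L.length, Or.inl le_rfl⟩

theorem unsaturated_of_lt_fdaSaturation (hℓ : ℓ < Sat A L r) :
    ℓ < L.length ∧ regionCount region (State A L ℓ) r < qreg r := by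
  unfold fdaSaturation at hℓ
  have := Nat.find_min _ hℓ
  push Not at this
  exact this

theorem fdaTurn_eq_self {st : H → Finset D}
    (hsat : qreg (region h) ≤ regionCount region st (region h)) : Turn A st h = st := by
  rw [fdaTurn, if_neg fun hc => hc.1.not_ge hsat]

theorem fdaTurn_topN (hinj : Function.Injective (prio h)) {m m' : H → ℕ}
    (hmh : m' h = m h + 1) (hm : ∀ g ≠ h, m' g = m g)
    (hreg : regionCount region (fun g => topN prio g (min (q g) (m g)) (applicants pref acc A g))
      (region h) < qreg (region h)) :
    Turn A (fun g => topN prio g (min (q g) (m g)) (applicants pref acc A g)) h =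
      fun g => topN prio g (min (q g) (m' g)) (applicants pref acc A g) := by
  have hcard := card_topN hinj (min (q h) (m h)) (applicants pref acc A h)
  by_cases hroom : #(topN prio h (min (q h) (m h)) (applicants pref acc A h)) < q h
  · rw [fdaTurn, if_pos ⟨hreg, hroom⟩]
    funext g
    rcases eq_or_ne g h with rfl | hg
    · rw [Function.update_self]
      change topN prio g (min (q g) (m g)) (applicants pref acc A g) ∪
        bestRemaining prio g (applicants pref acc A g) _ = _
      rw [← topN_succ hinj, hmh]
      rcases lt_or_ge (m g) (q g) with hlt | hge
      · congr 1
        omega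
      · rw [topN_eq_self (by omega), topN_eq_self (by omega)]
    · rw [Function.update_of_ne hg, hm g hg]
  · rw [fdaTurn, if_neg fun hc => hroom hc.2]
    funext g
    rcases eq_or_ne g h with rfl | hg
    · rw [hmh]
      congr 1
      omega
    · rw [hm g hg]

theorem fdaState_eq_topN (hinj : ∀ h, Function.Injective (prio h)) (htq : ∀ h, tgt h ≤ q h)
    (hL : ∀ h ∈ L, region h = r) (hℓ : ℓ ≤ Sat A L r) :
    State A L ℓ = fun g =>
      topN prio g (min (q g) (tgt g + (L.take ℓ).count g)) (applicants pref acc A g) := by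
  induction ℓ with
  | zero =>
    funext g
    simp [fdaState, min_eq_right (htq g)]
  | succ ℓ ih =>
    obtain ⟨hlen, hunsat⟩ := unsaturated_of_lt_fdaSaturation hℓ
    have hr : region L[ℓ] = r := hL _ (List.getElem_mem hlen)
    rw [fdaState_succ hlen, ih (by omega)]
    rw [ih (by omega)] at hunsat
    refine fdaTurn_topN (hinj _) ?_ (fun g hg => ?_) (hr ▸ hunsat)
    · rw [List.count_getElem_take_succ, add_assoc]
    · simp only [List.take_add_one, List.getElem?_eq_getElem hlen, Option.toList_some,
        List.count_append, List.count_singleton, beq_iff_eq, if_neg (Ne.symm hg), add_zero]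

theorem fdaState_eq_of_fdaSaturation_le (hL : ∀ h ∈ L, region h = r) (hℓ : Sat A L r ≤ ℓ) :
    State A L ℓ = State A L (Sat A L r) := by
  induction ℓ, hℓ using Nat.le_induction with
  | base => rfl
  | succ ℓ hle ih =>
    rw [← ih]
    rcases lt_or_ge ℓ L.length with hlen | hlen
    · rw [fdaState_succ hlen]
      apply fdaTurn_eq_self
      rw [hL _ (List.getElem_mem hlen), ih]
      exact fdaSaturation_spec.resolve_left (by omega)
    · exact fdaState_succ_of_length_le hlen

theorem fdaKept_eq_fdaState (hord : ∀ r h, h ∈ ord r → region h = r) :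
    fdaKept pref prio acc q region qreg tgt ord A h =
      State A (fdaSchedule D qreg ord (region h))
        (Sat A (fdaSchedule D qreg ord (region h)) (region h)) h := by
  have hL : ∀ g ∈ fdaSchedule D qreg ord (region h), region g = region h :=
    fun g hg => hord _ g (mem_of_mem_flatten_replicate hg)
  rw [← fdaState_eq_of_fdaSaturation_le hL fdaSaturation_le_length,
    fdaState, List.take_length, fdaKept, regionKept, iterate_foldl_eq_foldl_flatten_replicate]
  rfl

theorem fdaKept_eq_cappedKept (hinj : ∀ h, Function.Injective (prio h))
    (htq : ∀ h, tgt h ≤ q h) (hord : ∀ r h, h ∈ ord r → region h = r) :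
    fdaKept pref prio acc q region qreg tgt ord A h = cappedKept pref prio acc Cap A h := by
  have hL : ∀ g ∈ fdaSchedule D qreg ord (region h), region g = region h :=
    fun g hg => hord _ g (mem_of_mem_flatten_replicate hg)
  rw [fdaKept_eq_fdaState hord, fdaState_eq_topN hinj htq hL le_rfl]
  rfl

theorem fdaStep_eq_cappedStep (hinj : ∀ h, Function.Injective (prio h))
    (htq : ∀ h, tgt h ≤ q h) (hord : ∀ r h, h ∈ ord r → region h = r) :
    fdaStep pref prio acc q region qreg tgt ord = cappedStep pref prio acc Cap := by
  funext A
  simp only [fdaStep, cappedStep, fdaKept_eq_cappedKept hinj htq hord]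

theorem fdaSaturation_fdaStep_le (hinj : ∀ h, Function.Injective (prio h))
    (htq : ∀ h, tgt h ≤ q h) (hord : ∀ r h, h ∈ ord r → region h = r) :
    Sat (fdaStep pref prio acc q region qreg tgt ord A) (fdaSchedule D qreg ord r) r ≤
      Sat A (fdaSchedule D qreg ord r) r := by
  set L := fdaSchedule D qreg ord r
  have hL : ∀ h ∈ L, region h = r := fun h hh => hord r h (mem_of_mem_flatten_replicate hh)
  by_contra! hlt
  obtain ⟨hlen, hunsat⟩ := unsaturated_of_lt_fdaSaturation hlt
  have hsat : qreg r ≤ regionCount region (State A L (Sat A L r)) r :=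
    fdaSaturation_spec.resolve_left (by omega)
  refine hunsat.not_ge (hsat.trans (sum_le_sum fun g hg => ?_))
  have hgr : region g = r := (mem_filter.1 hg).2
  have hK : fdaKept pref prio acc q region qreg tgt ord A g = topN prio g
      (min (q g) (tgt g + (L.take (Sat A L r)).count g)) (applicants pref acc A g) := by
    rw [fdaKept_eq_fdaState hord, hgr, fdaState_eq_topN hinj htq hL le_rfl]
  rw [fdaState_eq_topN hinj htq hL le_rfl, fdaState_eq_topN hinj htq hL hlt.le]
  refine card_topN_le_card_topN (hinj g) ?_
  rw [← hK, fdaKept_eq_cappedKept hinj htq hord, fdaStep_eq_cappedStep hinj htq hord]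
  exact cappedKept_subset_applicants_cappedStep

theorem fdaCap_cappedStep_le (hinj : ∀ h, Function.Injective (prio h))
    (htq : ∀ h, tgt h ≤ q h) (hord : ∀ r h, h ∈ ord r → region h = r)
    (A : Finset (D × H)) (h : H) : Cap (cappedStep pref prio acc Cap A) h ≤ Cap A h := by
  rw [← fdaStep_eq_cappedStep hinj htq hord]
  exact min_le_min_left _ (Nat.add_le_add_left ((List.take_sublist_take_left
    (fdaSaturation_fdaStep_le hinj htq hord)).count_le h) _)

end FDA

theorem fda_eq_da_with_adapted_capacities_general
    {R : Type*} [DecidableEq R]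
    (pref : D → List H) (prio : H → D → ℕ) (acc : H → Finset D) (q : H → ℕ)
    (region : H → R) (qreg : R → ℕ) (tgt : H → ℕ) (ord : R → List H)
    (hinj : ∀ h, Function.Injective (prio h))
    (hord : ∀ r, (ord r).Nodup ∧ ∀ h, h ∈ ord r ↔ region h = r)
    (htq : ∀ h, tgt h ≤ q h) :
    ∀ d, daMatch pref prio acc
        (fun h => (matchedSet (fdaMatch pref prio acc q region qreg tgt ord) h).card) d
      = fdaMatch pref prio acc q region qreg tgt ord d := by
  have hregion : ∀ r h, h ∈ ord r → region h = r := fun r h => ((hord r).2 h).1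
  set cap := fdaCap pref prio acc q region qreg tgt ord
  set A := cappedRejections pref prio acc cap
  have hfda : fdaMatch pref prio acc q region qreg tgt ord = fun d => propose pref A d := by
    funext d
    rw [fdaMatch, fdaStep_eq_cappedStep hinj htq hregion]
    rfl
  have hmatched : matchedSet (fdaMatch pref prio acc q region qreg tgt ord) =
      cappedKept pref prio acc cap A := by
    rw [hfda, ← proposers_eq_cappedKept_of_isFixedPt cappedStep_cappedRejections]
    rfl
  intro d
  rw [hmatched, daMatch_eq_propose_cappedRejections,
    cappedRejections_adapted_eq hinj (fdaCap_cappedStep_le hinj htq hregion), hfda]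

/-- Theorem 2 of the paper: let `μ^F` be the matching produced by the
FDA algorithm, and define adapted capacities `q̃ h = |μ^F_h|`. Then the
doctor-proposing DA algorithm run with capacities `q̃` (and no regional caps)
produces exactly `μ^F`. -/
theorem fda_eq_da_with_adapted_capacities
    {R : Type*} [Fintype R] [DecidableEq R]
    (pref : D → List H) (prio : H → D → ℕ) (acc : H → Finset D) (q : H → ℕ)
    (region : H → R) (qreg : R → ℕ) (tgt : H → ℕ) (ord : R → List H)
    (hinj : ∀ h, Function.Injective (prio h)) (hnd : ∀ d, (pref d).Nodup)
    (hord : ∀ r, (ord r).Nodup ∧ ∀ h, h ∈ ord r ↔ region h = r)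
    (htgt : ∀ r, ∑ h ∈ univ.filter (fun h => region h = r), tgt h ≤ qreg r)
    (htq : ∀ h, tgt h ≤ q h) :
    ∀ d, daMatch pref prio acc
        (fun h => (matchedSet (fdaMatch pref prio acc q region qreg tgt ord) h).card) d
      = fdaMatch pref prio acc q region qreg tgt ord d :=
  fda_eq_da_with_adapted_capacities_general pref prio acc q region qreg tgt ord hinj hord htq
end
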